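/- Assume κ < 1. Let x̂, û ∈ C^{1,−}, let Z = (X_Z, Y_Z) be the unique fixed point of J_{x̂,ξ} and W = (X_W, Y_W) the unique fixed point of J_{û,ξ}, and define the slow-manifold graph values h_{x̂}(ξ) := X_Z(0) + x̂(0) and h_{û}(ξ) := X_W(0) + û(0). Then ‖h_{x̂}(ξ) − h_{û}(ξ)‖ ≤ ( K/((γ₁−ρ)(1−κ)) + 1 ) ‖x̂ − û‖₁. In particular, if a family x̂_μ satisfies ‖x̂_μ − û‖₁ → 0 as μ → 0, then h_{x̂_μ}(ξ) → h_{û}(ξ) at the same rate. -/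

import Mathlib

open MeasureTheory

/-- The weighted sup-norm `‖φ‖ = sup_{t ≤ 0} e^{w t} ‖φ(t)‖` on paths `(-∞,0] → H`
(with weight `w = ρ/ε`). -/
noncomputable def wnorm {H : Type*} [NormedAddCommGroup H] (w : ℝ) (φ : ℝ → H) : ℝ :=
  ⨆ t : Set.Iic (0:ℝ), Real.exp (w * t.1) * ‖φ t.1‖

/-- Membership in the weighted space `C⁻_w`: continuity on `(-∞,0]` together with
finiteness of the weighted sup-norm `sup_{t ≤ 0} e^{w t} ‖φ(t)‖`. -/
def MemCminus {H : Type*} [NormedAddCommGroup H] (w : ℝ) (φ : ℝ → H) : Prop :=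
  ContinuousOn φ (Set.Iic 0) ∧
    BddAbove (Set.range (fun t : Set.Iic (0:ℝ) => Real.exp (w * t.1) * ‖φ t.1‖))

/-- `(X, Y)` is a fixed point of the Lyapunov–Perron operator `J_{x̂,ξ}` in the weighted
space `C⁻_w`: both components lie in `C⁻_w` and satisfy the Lyapunov–Perron equations
for all `t ≤ 0`. -/
def IsLPFixedPoint {H₁ H₂ : Type*}
    [NormedAddCommGroup H₁] [NormedSpace ℝ H₁] [NormedAddCommGroup H₂] [NormedSpace ℝ H₂]
    (S : ℝ → H₁ →L[ℝ] H₁) (G : ℝ → H₂ →L[ℝ] H₂)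
    (f : H₁ × H₂ → H₁) (g : H₁ × H₂ → H₂)
    (ε w : ℝ) (xhat : ℝ → H₁) (ξ : H₂) (X : ℝ → H₁) (Y : ℝ → H₂) : Prop :=
  MemCminus w X ∧ MemCminus w Y ∧
    ∀ t : ℝ, t ≤ 0 →
      X t = ε⁻¹ • ∫ s in Set.Iic t, S ((t - s) / ε) (f (X s + xhat s, Y s)) ∧
      Y t = G t ξ + ∫ s in (0:ℝ)..t, G (t - s) (g (X s + xhat s, Y s))


section helperproofs
open MeasureTheory Set



lemma hasDerivAt_exp_mul_div (c x : ℝ) (hc : c ≠ 0) :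
    HasDerivAt (fun y : ℝ => Real.exp (c * y) / c) (Real.exp (c * x)) x := by
  have h1 : HasDerivAt (fun y : ℝ => c * y) c x := by
    simpa using (hasDerivAt_id x).const_mul c
  have h2 := (Real.hasDerivAt_exp (c * x)).comp x h1
  have := h2.div_const c
  simpa [mul_div_assoc, mul_div_cancel_right₀ _ hc] using this

lemma cont_exp_mul (c : ℝ) : Continuous fun s : ℝ => Real.exp (c * s) := by fun_prop

lemma integral_exp_mul_ab (c a b : ℝ) (hc : c ≠ 0) :
    ∫ x in a..b, Real.exp (c * x) = (Real.exp (c * b) - Real.exp (c * a)) / c := by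
  rw [intervalIntegral.integral_eq_sub_of_hasDerivAt
    (fun x _ => hasDerivAt_exp_mul_div c x hc) ((cont_exp_mul c).intervalIntegrable a b)]
  ring

lemma integrableOn_exp_mul_Iic_h {c : ℝ} (hc : 0 < c) (t : ℝ) :
    IntegrableOn (fun s => Real.exp (c * s)) (Set.Iic t) := by
  refine integrableOn_Iic_of_intervalIntegral_norm_bounded (Real.exp (c*t)/c) t
    (fun y : ℝ => ((cont_exp_mul c).intervalIntegrable _ _).1)
    Filter.tendsto_id (Filter.Eventually.of_forall fun y => ?_)
  simp_rw [Real.norm_of_nonneg (Real.exp_pos _).le]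
  simp only [id_eq]
  rw [integral_exp_mul_ab c y t hc.ne']
  have h1 : 0 < Real.exp (c*y) := Real.exp_pos _
  rw [div_le_div_iff_of_pos_right hc]; linarith

lemma integral_exp_mul_Iic_h {c : ℝ} (hc : 0 < c) (t : ℝ) :
    ∫ s in Set.Iic t, Real.exp (c * s) = Real.exp (c * t) / c := by
  have := MeasureTheory.integral_Iic_of_hasDerivAt_of_tendsto
    (f := fun y : ℝ => Real.exp (c * y) / c) (f' := fun y => Real.exp (c*y)) (a := t) (m := 0)
    ((hasDerivAt_exp_mul_div c t hc.ne').continuousAt.continuousWithinAt)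
    (fun x _ => hasDerivAt_exp_mul_div c x hc.ne') (integrableOn_exp_mul_Iic_h hc t) ?_
  · rw [this, sub_zero]
  · have h : Filter.Tendsto (fun y : ℝ => c * y) Filter.atBot Filter.atBot :=
      (Filter.tendsto_const_mul_atBot_of_pos hc).2 Filter.tendsto_id
    simpa using (Real.tendsto_exp_atBot.comp h).div_const c

variable {H : Type*} [NormedAddCommGroup H]

lemma wnorm_bound {w : ℝ} {φ : ℝ → H}
    (hb : BddAbove (Set.range (fun t : Set.Iic (0:ℝ) => Real.exp (w * t.1) * ‖φ t.1‖)))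
    {t : ℝ} (ht : t ≤ 0) : Real.exp (w * t) * ‖φ t‖ ≤ wnorm w φ :=
  le_ciSup hb ⟨t, ht⟩

lemma wnorm_nonneg {w : ℝ} {φ : ℝ → H}
    (hb : BddAbove (Set.range (fun t : Set.Iic (0:ℝ) => Real.exp (w * t.1) * ‖φ t.1‖))) :
    0 ≤ wnorm w φ :=
  le_trans (mul_nonneg (Real.exp_pos _).le (norm_nonneg _)) (wnorm_bound hb le_rfl)

lemma norm_le_wnorm {w : ℝ} {φ : ℝ → H}
    (hb : BddAbove (Set.range (fun t : Set.Iic (0:ℝ) => Real.exp (w * t.1) * ‖φ t.1‖)))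
    {t : ℝ} (ht : t ≤ 0) : ‖φ t‖ ≤ Real.exp (-(w * t)) * wnorm w φ := by
  have h := mul_le_mul_of_nonneg_left (wnorm_bound hb ht) (Real.exp_pos (-(w*t))).le
  rwa [← mul_assoc, ← Real.exp_add, neg_add_cancel, Real.exp_zero, one_mul] at h

lemma bdd_sub {w : ℝ} {φ ψ : ℝ → H}
    (hφ : BddAbove (Set.range (fun t : Set.Iic (0:ℝ) => Real.exp (w * t.1) * ‖φ t.1‖)))
    (hψ : BddAbove (Set.range (fun t : Set.Iic (0:ℝ) => Real.exp (w * t.1) * ‖ψ t.1‖))) :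
    BddAbove (Set.range (fun t : Set.Iic (0:ℝ) =>
      Real.exp (w * t.1) * ‖(fun s => φ s - ψ s) t.1‖)) := by
  refine ⟨wnorm w φ + wnorm w ψ, ?_⟩
  rintro x ⟨⟨t, ht⟩, rfl⟩
  have h1 := wnorm_bound hφ ht
  have h2 := wnorm_bound hψ ht
  have h3 : ‖φ t - ψ t‖ ≤ ‖φ t‖ + ‖ψ t‖ := norm_sub_le _ _
  have := mul_le_mul_of_nonneg_left h3 (Real.exp_pos (w*t)).le
  simp only
  nlinarith

lemma cont_of_lip {E₁ E₂ F : Type*} [NormedAddCommGroup E₁] [NormedAddCommGroup E₂]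
    [NormedAddCommGroup F] (f : E₁ × E₂ → F) (K : ℝ)
    (hf : ∀ p q, ‖f p - f q‖ ≤ K * (‖p.1 - q.1‖ + ‖p.2 - q.2‖)) : Continuous f := by
  rw [continuous_iff_continuousAt]
  intro p₀
  rw [ContinuousAt, tendsto_iff_norm_sub_tendsto_zero]
  apply squeeze_zero (fun p => norm_nonneg _) (fun p => hf p p₀)
  have hc : Continuous fun p : E₁ × E₂ => K * (‖p.1 - p₀.1‖ + ‖p.2 - p₀.2‖) := by fun_prop
  have h0 : K * (‖p₀.1 - p₀.1‖ + ‖p₀.2 - p₀.2‖) = 0 := by simp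
  simpa [h0] using (hc.tendsto p₀)

variable [NormedSpace ℝ H]

lemma strong_cont_apply (T : ℝ → H →L[ℝ] H) (B : Set ℝ) (C : ℝ)
    (hTc : ∀ x, ContinuousOn (fun t => T t x) B)
    (hTb : ∀ t ∈ B, ∀ x : H, ‖T t x‖ ≤ C * ‖x‖)
    {A : Set ℝ} {τ : ℝ → ℝ} {v : ℝ → H}
    (hτ : ContinuousOn τ A) (hτB : Set.MapsTo τ A B) (hv : ContinuousOn v A) :
    ContinuousOn (fun s => T (τ s) (v s)) A := by
  intro s₀ hs₀
  have h1 : ContinuousWithinAt (fun s => T (τ s) (v s₀)) A s₀ :=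
    ((hTc (v s₀)) (τ s₀) (hτB hs₀)).comp (hτ s₀ hs₀) hτB
  have h2 : Filter.Tendsto (fun s => T (τ s) (v s) - T (τ s) (v s₀))
      (nhdsWithin s₀ A) (nhds 0) := by
    apply squeeze_zero_norm' ?_ ?_ (a := fun s => C * ‖v s - v s₀‖)
    · filter_upwards [self_mem_nhdsWithin] with s hs
      rw [← map_sub]
      exact hTb _ (hτB hs) _
    · have hv0 : Filter.Tendsto (fun s => v s - v s₀) (nhdsWithin s₀ A) (nhds 0) := by
        have h4 := Filter.Tendsto.sub (hv s₀ hs₀) (tendsto_const_nhds (x := v s₀) (f := nhdsWithin s₀ A))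
        simpa using h4
      simpa using (hv0.norm.const_mul C)
  have h3 := h2.add h1
  simp only [ContinuousWithinAt]
  convert h3 using 2 with s
  · abel
  · simp

variable [CompleteSpace H]

lemma iic_integral_bound {F : ℝ → H} {t C c : ℝ} (hc : 0 < c) (hC : 0 ≤ C)
    (hFc : ContinuousOn F (Set.Iic t))
    (hFb : ∀ s, s ≤ t → ‖F s‖ ≤ C * Real.exp (c * s)) :
    IntegrableOn F (Set.Iic t) ∧
      ‖∫ s in Set.Iic t, F s‖ ≤ C * Real.exp (c * t) / c := by
  have hmeas : AEStronglyMeasurable F (volume.restrict (Set.Iic t)) :=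
    hFc.aestronglyMeasurable measurableSet_Iic
  have hgint : IntegrableOn (fun s => C * Real.exp (c * s)) (Set.Iic t) :=
    (integrableOn_exp_mul_Iic_h hc t).const_mul C
  have hae : ∀ᵐ s ∂(volume.restrict (Set.Iic t)), ‖F s‖ ≤ C * Real.exp (c * s) := by
    filter_upwards [ae_restrict_mem measurableSet_Iic] with s hs using hFb s hs
  have hint : IntegrableOn F (Set.Iic t) := hgint.mono' hmeas hae
  refine ⟨hint, ?_⟩
  calc ‖∫ s in Set.Iic t, F s‖ ≤ ∫ s in Set.Iic t, C * Real.exp (c * s) :=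
        norm_integral_le_of_norm_le hgint hae
    _ = C * (Real.exp (c * t) / c) := by rw [integral_const_mul, integral_exp_mul_Iic_h hc]
    _ = C * Real.exp (c * t) / c := by ring

lemma interval_bound {F : ℝ → H} {t C γ w' : ℝ} (ht : t ≤ 0) (hC : 0 ≤ C)
    (hγw : γ < w')
    (hFc : ContinuousOn F (Set.uIcc 0 t))
    (hFb : ∀ s, t ≤ s → s ≤ 0 → ‖F s‖ ≤ C * Real.exp (-γ * (t - s)) * Real.exp (-w' * s)) :
    ‖∫ s in (0:ℝ)..t, F s‖ ≤ C * Real.exp (-w' * t) / (w' - γ) := by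
  have hwγ : 0 < w' - γ := by linarith
  have hFi : IntervalIntegrable F volume t 0 :=
    (hFc.mono (by rw [uIcc_comm])).intervalIntegrable
  have hgc : Continuous fun s => C * Real.exp (-γ * (t - s)) * Real.exp (-w' * s) := by fun_prop
  have hnormint : IntervalIntegrable (fun s => ‖F s‖) volume t 0 := hFi.norm
  calc ‖∫ s in (0:ℝ)..t, F s‖ = ‖∫ s in t..(0:ℝ), F s‖ := by
        rw [intervalIntegral.integral_symm, norm_neg]
    _ ≤ ∫ s in t..(0:ℝ), ‖F s‖ := intervalIntegral.norm_integral_le_integral_norm ht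
    _ ≤ ∫ s in t..(0:ℝ), C * Real.exp (-γ * (t - s)) * Real.exp (-w' * s) := by
        apply intervalIntegral.integral_mono_on ht hnormint (hgc.intervalIntegrable _ _)
        intro s hs
        exact hFb s hs.1 hs.2
    _ = ∫ s in t..(0:ℝ), (C * Real.exp (-γ * t)) * Real.exp ((γ - w') * s) := by
        apply intervalIntegral.integral_congr
        intro s _
        dsimp only
        rw [mul_assoc, ← Real.exp_add, mul_assoc, ← Real.exp_add]
        congr 2
        ring
    _ = (C * Real.exp (-γ * t)) *
          ((Real.exp ((γ - w') * 0) - Real.exp ((γ - w') * t)) / (γ - w')) := by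
        rw [intervalIntegral.integral_const_mul, integral_exp_mul_ab _ _ _ (by linarith)]
    _ ≤ C * Real.exp (-w' * t) / (w' - γ) := by
        rw [mul_zero, Real.exp_zero]
        have he : Real.exp (-γ * t) * Real.exp ((γ - w') * t) = Real.exp (-w' * t) := by
          rw [← Real.exp_add]; congr 1; ring
        have h1 : 0 < Real.exp (-γ * t) := Real.exp_pos _
        have h2 : 0 < Real.exp ((γ - w') * t) := Real.exp_pos _
        rw [div_eq_mul_inv, div_eq_mul_inv]
        have : (1 - Real.exp ((γ - w') * t)) / (γ - w')
            = (Real.exp ((γ - w') * t) - 1) / (w' - γ) := by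
          rw [div_eq_div_iff (by linarith) (by linarith)]; ring
        rw [div_eq_mul_inv] at this
        rw [this, div_eq_mul_inv]
        have hkey : C * Real.exp (-γ * t) * (Real.exp ((γ - w') * t) - 1)
            ≤ C * Real.exp (-w' * t) := by nlinarith
        calc C * Real.exp (-γ * t) * ((Real.exp ((γ - w') * t) - 1) * (w' - γ)⁻¹)
            = C * Real.exp (-γ * t) * (Real.exp ((γ - w') * t) - 1) * (w' - γ)⁻¹ := by ring
          _ ≤ C * Real.exp (-w' * t) * (w' - γ)⁻¹ :=
              mul_le_mul_of_nonneg_right hkey (inv_nonneg.2 (by linarith : (0:ℝ) ≤ w' - γ))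


end helperproofs

set_option maxHeartbeats 2000000 in
/-- Assume `κ = K/(γ₁-ρ) + εK/(ρ-εγ₂) < 1`. Let `x̂, û ∈ C^{1,-}` and
`Z = (X_Z, Y_Z)`, `W = (X_W, Y_W)` the unique fixed points of `J_{x̂,ξ}`, `J_{û,ξ}`, and
define the slow-manifold graph values `h_{x̂}(ξ) := X_Z(0) + x̂(0)`,
`h_{û}(ξ) := X_W(0) + û(0)`. Then
`‖h_{x̂}(ξ) - h_{û}(ξ)‖ ≤ (K/((γ₁-ρ)(1-κ)) + 1) ‖x̂ - û‖₁`; in particular if a family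
`x̂_μ` satisfies `‖x̂_μ - û‖₁ → 0` as `μ → 0`, then `h_{x̂_μ}(ξ) → h_{û}(ξ)` at the
same rate. -/
theorem stmt9
    {H₁ H₂ : Type*}
    [NormedAddCommGroup H₁] [InnerProductSpace ℝ H₁] [CompleteSpace H₁]
    [TopologicalSpace.SeparableSpace H₁]
    [NormedAddCommGroup H₂] [InnerProductSpace ℝ H₂] [CompleteSpace H₂]
    [TopologicalSpace.SeparableSpace H₂]
    (S : ℝ → H₁ →L[ℝ] H₁) (G : ℝ → H₂ →L[ℝ] H₂)
    (γ₁ γ₂ : ℝ) (hγ₁ : 0 < γ₁) (hγ₂ : 0 < γ₂)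
    (hS0 : S 0 = 1)
    (hSadd : ∀ t s : ℝ, 0 ≤ t → 0 ≤ s → S (t + s) = (S t).comp (S s))
    (hScont : ∀ x : H₁, ContinuousOn (fun t : ℝ => S t x) (Set.Ici 0))
    (hSdecay : ∀ t : ℝ, 0 ≤ t → ∀ x : H₁, ‖S t x‖ ≤ Real.exp (-γ₁ * t) * ‖x‖)
    (hG0 : G 0 = 1)
    (hGadd : ∀ t s : ℝ, G (t + s) = (G t).comp (G s))
    (hGcont : ∀ y : H₂, Continuous fun t : ℝ => G t y)
    (hGdecay : ∀ t : ℝ, t ≤ 0 → ∀ y : H₂, ‖G t y‖ ≤ Real.exp (-γ₂ * t) * ‖y‖)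
    (f : H₁ × H₂ → H₁) (g : H₁ × H₂ → H₂) (K : ℝ) (hK : 0 < K)
    (hf : ∀ p q : H₁ × H₂, ‖f p - f q‖ ≤ K * (‖p.1 - q.1‖ + ‖p.2 - q.2‖))
    (hg : ∀ p q : H₁ × H₂, ‖g p - g q‖ ≤ K * (‖p.1 - q.1‖ + ‖p.2 - q.2‖))
    (hf0 : f (0, 0) = 0) (hg0 : g (0, 0) = 0)
    (ε ρ : ℝ) (hε : 0 < ε) (hρ : 0 < ρ)
    (hgap : K < γ₁ - ρ) (hρε : 0 < ρ - ε * γ₂)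
    (hκ : K / (γ₁ - ρ) + ε * K / (ρ - ε * γ₂) < 1)
    (xhat uhat : ℝ → H₁)
    (hxhat : MemCminus (ρ / ε) xhat) (huhat : MemCminus (ρ / ε) uhat)
    (ξ : H₂) (XZ XW : ℝ → H₁) (YZ YW : ℝ → H₂)
    (hZ : IsLPFixedPoint S G f g ε (ρ / ε) xhat ξ XZ YZ)
    (hW : IsLPFixedPoint S G f g ε (ρ / ε) uhat ξ XW YW) :
    ‖(XZ 0 + xhat 0) - (XW 0 + uhat 0)‖ ≤
      (K / ((γ₁ - ρ) * (1 - (K / (γ₁ - ρ) + ε * K / (ρ - ε * γ₂)))) + 1) *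
        wnorm (ρ / ε) (fun t => xhat t - uhat t) := by
  classical
  obtain ⟨⟨hXZc, hXZb⟩, ⟨hYZc, hYZb⟩, hZeq⟩ := hZ
  obtain ⟨⟨hXWc, hXWb⟩, ⟨hYWc, hYWb⟩, hWeq⟩ := hW
  obtain ⟨hxc, hxb⟩ := hxhat
  obtain ⟨huc, hub⟩ := huhat
  haveI : Nonempty (Set.Iic (0:ℝ)) := ⟨⟨0, Set.mem_Iic.2 le_rfl⟩⟩
  set w : ℝ := ρ / ε with hw
  have hγρ : 0 < γ₁ - ρ := by linarith
  have hwpos : 0 < w := div_pos hρ hε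
  have hwγ₂ : γ₂ < w := by rw [hw, lt_div_iff₀ hε]; nlinarith
  have hwγ₂' : w - γ₂ = (ρ - ε * γ₂) / ε := by rw [hw]; field_simp
  set a := K / (γ₁ - ρ) with ha
  set b := ε * K / (ρ - ε * γ₂) with hb
  have ha0 : 0 < a := div_pos hK hγρ
  have hb0 : 0 < b := div_pos (by positivity) hρε
  have hb' : b = K / (w - γ₂) := by
    rw [hb, hwγ₂', div_div_eq_mul_div, mul_comm ε K, mul_div_assoc]
  -- bddAbove facts for differences
  have hDXb := bdd_sub hXZb hXWb
  have hDYb := bdd_sub hYZb hYWb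
  have hΔb := bdd_sub hxb hub
  set Δ := wnorm w (fun t => xhat t - uhat t) with hΔdef
  set DX := wnorm w (fun t => XZ t - XW t) with hDXdef
  set DY := wnorm w (fun t => YZ t - YW t) with hDYdef
  have hΔ0 : 0 ≤ Δ := wnorm_nonneg (φ := fun s => xhat s - uhat s) hΔb
  have hDX0 : 0 ≤ DX := wnorm_nonneg (φ := fun s => XZ s - XW s) hDXb
  have hDY0 : 0 ≤ DY := wnorm_nonneg (φ := fun s => YZ s - YW s) hDYb
  set D := DX + DY + Δ with hDdef
  have hD0 : 0 ≤ D := by positivity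
  -- pointwise bound on the combined difference
  have hdelta : ∀ s : ℝ, s ≤ 0 → ‖(XZ s + xhat s) - (XW s + uhat s)‖ + ‖YZ s - YW s‖
      ≤ Real.exp (-(w * s)) * D := by
    intro s hs
    have h1 := norm_le_wnorm (φ := fun s => XZ s - XW s) hDXb hs
    have h2 := norm_le_wnorm (φ := fun s => YZ s - YW s) hDYb hs
    have h3 := norm_le_wnorm (φ := fun s => xhat s - uhat s) hΔb hs
    have h4 : ‖(XZ s + xhat s) - (XW s + uhat s)‖ ≤ ‖XZ s - XW s‖ + ‖xhat s - uhat s‖ := by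
      have he : (XZ s + xhat s) - (XW s + uhat s) = (XZ s - XW s) + (xhat s - uhat s) := by abel
      rw [he]; exact norm_add_le _ _
    rw [hDdef]
    have hep : (0:ℝ) < Real.exp (-(w * s)) := Real.exp_pos _
    nlinarith
  -- continuity of f and g
  have hfc : Continuous f := cont_of_lip f K hf
  have hgc : Continuous g := cont_of_lip g K hg
  -- norm bounds on f and g
  have hnormf : ∀ p : H₁ × H₂, ‖f p‖ ≤ K * (‖p.1‖ + ‖p.2‖) := by
    intro p
    have h := hf p (0, 0)
    rw [hf0, sub_zero] at h
    simpa using h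
  have hnormg : ∀ p : H₁ × H₂, ‖g p‖ ≤ K * (‖p.1‖ + ‖p.2‖) := by
    intro p
    have h := hg p (0, 0)
    rw [hg0, sub_zero] at h
    simpa using h
  -- growth bounds for individual paths
  set MZ := wnorm w XZ + wnorm w xhat + wnorm w YZ with hMZ
  set MW := wnorm w XW + wnorm w uhat + wnorm w YW with hMW
  have hMZ0 : 0 ≤ MZ := by
    rw [hMZ]
    have := wnorm_nonneg hXZb; have := wnorm_nonneg hxb; have := wnorm_nonneg hYZb; linarith
  have hMW0 : 0 ≤ MW := by
    rw [hMW]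
    have := wnorm_nonneg hXWb; have := wnorm_nonneg hub; have := wnorm_nonneg hYWb; linarith
  have hfZb : ∀ s : ℝ, s ≤ 0 → ‖f (XZ s + xhat s, YZ s)‖ ≤ K * MZ * Real.exp (-(w * s)) := by
    intro s hs
    have h1 := norm_le_wnorm hXZb hs
    have h2 := norm_le_wnorm hxb hs
    have h3 := norm_le_wnorm hYZb hs
    have h4 := hnormf (XZ s + xhat s, YZ s)
    have h5 : ‖XZ s + xhat s‖ ≤ ‖XZ s‖ + ‖xhat s‖ := norm_add_le _ _
    have hep : (0:ℝ) < Real.exp (-(w * s)) := Real.exp_pos _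
    simp only at h4
    rw [hMZ]
    nlinarith
  have hfWb : ∀ s : ℝ, s ≤ 0 → ‖f (XW s + uhat s, YW s)‖ ≤ K * MW * Real.exp (-(w * s)) := by
    intro s hs
    have h1 := norm_le_wnorm hXWb hs
    have h2 := norm_le_wnorm hub hs
    have h3 := norm_le_wnorm hYWb hs
    have h4 := hnormf (XW s + uhat s, YW s)
    have h5 : ‖XW s + uhat s‖ ≤ ‖XW s‖ + ‖uhat s‖ := norm_add_le _ _
    have hep : (0:ℝ) < Real.exp (-(w * s)) := Real.exp_pos _
    simp only at h4
    rw [hMW]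
    nlinarith
  -- Claim X
  have claimX : ∀ t : ℝ, t ≤ 0 → Real.exp (w * t) * ‖XZ t - XW t‖ ≤ a * D := by
    intro t ht
    set c := (γ₁ - ρ) / ε with hc
    have hcpos : 0 < c := div_pos hγρ hε
    have hτmaps : Set.MapsTo (fun s => (t - s) / ε) (Set.Iic t) (Set.Ici (0:ℝ)) := by
      intro s hs
      exact div_nonneg (by simp only [Set.mem_Iic] at hs; linarith) hε.le
    have hSbd1 : ∀ τ ∈ Set.Ici (0:ℝ), ∀ x : H₁, ‖S τ x‖ ≤ 1 * ‖x‖ := by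
      intro τ hτ x
      have h1 := hSdecay τ hτ x
      have h2 : Real.exp (-γ₁ * τ) ≤ 1 := by
        rw [Real.exp_le_one_iff]; simp only [Set.mem_Ici] at hτ; nlinarith
      calc ‖S τ x‖ ≤ Real.exp (-γ₁ * τ) * ‖x‖ := h1
        _ ≤ 1 * ‖x‖ := mul_le_mul_of_nonneg_right h2 (norm_nonneg _)
    have hsub : Set.Iic t ⊆ Set.Iic (0:ℝ) := Set.Iic_subset_Iic.2 ht
    have hcontZv : ContinuousOn (fun s => f (XZ s + xhat s, YZ s)) (Set.Iic t) :=
      hfc.comp_continuousOn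
        (((hXZc.mono hsub).add (hxc.mono hsub)).prodMk (hYZc.mono hsub))
    have hcontWv : ContinuousOn (fun s => f (XW s + uhat s, YW s)) (Set.Iic t) :=
      hfc.comp_continuousOn
        (((hXWc.mono hsub).add (huc.mono hsub)).prodMk (hYWc.mono hsub))
    have hτcont : ContinuousOn (fun s => (t - s) / ε) (Set.Iic t) := by fun_prop
    have hcontZ : ContinuousOn (fun s => S ((t - s) / ε) (f (XZ s + xhat s, YZ s)))
        (Set.Iic t) := strong_cont_apply S (Set.Ici 0) 1 hScont hSbd1 hτcont hτmaps hcontZv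
    have hcontW : ContinuousOn (fun s => S ((t - s) / ε) (f (XW s + uhat s, YW s)))
        (Set.Iic t) := strong_cont_apply S (Set.Ici 0) 1 hScont hSbd1 hτcont hτmaps hcontWv
    have hexp : ∀ s : ℝ, Real.exp (-γ₁ * ((t - s) / ε)) * Real.exp (-(w * s))
        = Real.exp (-(γ₁ / ε) * t) * Real.exp (c * s) := by
      intro s
      rw [← Real.exp_add, ← Real.exp_add]
      congr 1
      rw [hw, hc]
      field_simp
      ring
    have hboundZ : ∀ s : ℝ, s ≤ t → ‖S ((t - s) / ε) (f (XZ s + xhat s, YZ s))‖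
        ≤ (K * MZ * Real.exp (-(γ₁ / ε) * t)) * Real.exp (c * s) := by
      intro s hs
      have h1 := hSdecay ((t - s) / ε) (hτmaps hs) (f (XZ s + xhat s, YZ s))
      have h2 := hfZb s (hs.trans ht)
      have hep : (0:ℝ) < Real.exp (-γ₁ * ((t - s) / ε)) := Real.exp_pos _
      calc ‖S ((t - s) / ε) (f (XZ s + xhat s, YZ s))‖
          ≤ Real.exp (-γ₁ * ((t - s) / ε)) * ‖f (XZ s + xhat s, YZ s)‖ := h1
        _ ≤ Real.exp (-γ₁ * ((t - s) / ε)) * (K * MZ * Real.exp (-(w * s))) :=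
            mul_le_mul_of_nonneg_left h2 hep.le
        _ = (K * MZ) * (Real.exp (-γ₁ * ((t - s) / ε)) * Real.exp (-(w * s))) := by ring
        _ = (K * MZ * Real.exp (-(γ₁ / ε) * t)) * Real.exp (c * s) := by rw [hexp s]; ring
    have hboundW : ∀ s : ℝ, s ≤ t → ‖S ((t - s) / ε) (f (XW s + uhat s, YW s))‖
        ≤ (K * MW * Real.exp (-(γ₁ / ε) * t)) * Real.exp (c * s) := by
      intro s hs
      have h1 := hSdecay ((t - s) / ε) (hτmaps hs) (f (XW s + uhat s, YW s))
      have h2 := hfWb s (hs.trans ht)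
      have hep : (0:ℝ) < Real.exp (-γ₁ * ((t - s) / ε)) := Real.exp_pos _
      calc ‖S ((t - s) / ε) (f (XW s + uhat s, YW s))‖
          ≤ Real.exp (-γ₁ * ((t - s) / ε)) * ‖f (XW s + uhat s, YW s)‖ := h1
        _ ≤ Real.exp (-γ₁ * ((t - s) / ε)) * (K * MW * Real.exp (-(w * s))) :=
            mul_le_mul_of_nonneg_left h2 hep.le
        _ = (K * MW) * (Real.exp (-γ₁ * ((t - s) / ε)) * Real.exp (-(w * s))) := by ring
        _ = (K * MW * Real.exp (-(γ₁ / ε) * t)) * Real.exp (c * s) := by rw [hexp s]; ring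
    have hintZ := (iic_integral_bound hcpos (by positivity) hcontZ hboundZ).1
    have hintW := (iic_integral_bound hcpos (by positivity) hcontW hboundW).1
    have hdiffeq : XZ t - XW t = ε⁻¹ • ∫ s in Set.Iic t,
        (S ((t - s) / ε) (f (XZ s + xhat s, YZ s))
          - S ((t - s) / ε) (f (XW s + uhat s, YW s))) := by
      rw [(hZeq t ht).1, (hWeq t ht).1, ← smul_sub, ← integral_sub hintZ hintW]
    have hFdb : ∀ s : ℝ, s ≤ t →
        ‖S ((t - s) / ε) (f (XZ s + xhat s, YZ s))
          - S ((t - s) / ε) (f (XW s + uhat s, YW s))‖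
        ≤ (K * D * Real.exp (-(γ₁ / ε) * t)) * Real.exp (c * s) := by
      intro s hs
      have hs0 : s ≤ 0 := hs.trans ht
      rw [← map_sub]
      have h1 := hSdecay ((t - s) / ε) (hτmaps hs)
        (f (XZ s + xhat s, YZ s) - f (XW s + uhat s, YW s))
      have h2 := hf (XZ s + xhat s, YZ s) (XW s + uhat s, YW s)
      simp only at h2
      have h3 := hdelta s hs0
      have hep : (0:ℝ) < Real.exp (-γ₁ * ((t - s) / ε)) := Real.exp_pos _
      have h4 : ‖f (XZ s + xhat s, YZ s) - f (XW s + uhat s, YW s)‖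
          ≤ K * (Real.exp (-(w * s)) * D) := by nlinarith
      calc ‖S ((t - s) / ε) (f (XZ s + xhat s, YZ s) - f (XW s + uhat s, YW s))‖
          ≤ Real.exp (-γ₁ * ((t - s) / ε))
            * ‖f (XZ s + xhat s, YZ s) - f (XW s + uhat s, YW s)‖ := h1
        _ ≤ Real.exp (-γ₁ * ((t - s) / ε)) * (K * (Real.exp (-(w * s)) * D)) :=
            mul_le_mul_of_nonneg_left h4 hep.le
        _ = (K * D) * (Real.exp (-γ₁ * ((t - s) / ε)) * Real.exp (-(w * s))) := by ring
        _ = (K * D * Real.exp (-(γ₁ / ε) * t)) * Real.exp (c * s) := by rw [hexp s]; ring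
    have hbnd := (iic_integral_bound hcpos (by positivity) (hcontZ.sub hcontW) hFdb).2
    have hnorm : ‖XZ t - XW t‖ ≤ ε⁻¹ * ((K * D * Real.exp (-(γ₁ / ε) * t))
        * Real.exp (c * t) / c) := by
      rw [hdiffeq, norm_smul, Real.norm_eq_abs, abs_of_pos (inv_pos.2 hε)]
      exact mul_le_mul_of_nonneg_left hbnd (inv_pos.2 hε).le
    have heq : Real.exp (w * t) * (ε⁻¹ * ((K * D * Real.exp (-(γ₁ / ε) * t))
        * Real.exp (c * t) / c)) = a * D := by
      have h1 : Real.exp (w * t) * Real.exp (-(γ₁ / ε) * t) * Real.exp (c * t) = 1 := by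
        rw [← Real.exp_add, ← Real.exp_add, ← Real.exp_zero]
        congr 1
        rw [hw, hc]
        field_simp
        ring
      calc Real.exp (w * t) * (ε⁻¹ * ((K * D * Real.exp (-(γ₁ / ε) * t))
            * Real.exp (c * t) / c))
          = (Real.exp (w * t) * Real.exp (-(γ₁ / ε) * t) * Real.exp (c * t))
            * (ε⁻¹ * (K * D / c)) := by ring
        _ = ε⁻¹ * (K * D / c) := by rw [h1, one_mul]
        _ = a * D := by rw [ha, hc]; field_simp; try ring
    calc Real.exp (w * t) * ‖XZ t - XW t‖
        ≤ Real.exp (w * t) * (ε⁻¹ * ((K * D * Real.exp (-(γ₁ / ε) * t))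
          * Real.exp (c * t) / c)) :=
          mul_le_mul_of_nonneg_left hnorm (Real.exp_pos _).le
      _ = a * D := heq
  -- Claim Y
  have claimY : ∀ t : ℝ, t ≤ 0 → Real.exp (w * t) * ‖YZ t - YW t‖ ≤ b * D := by
    intro t ht
    have huIcc : Set.uIcc (0:ℝ) t = Set.Icc t 0 := by rw [Set.uIcc_of_ge ht]
    have hτmaps : Set.MapsTo (fun s => t - s) (Set.uIcc (0:ℝ) t) (Set.Icc t 0) := by
      rw [huIcc]
      intro s hs
      simp only [Set.mem_Icc] at hs ⊢
      constructor <;> linarith [hs.1, hs.2]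
    have hGbd : ∀ τ ∈ Set.Icc t 0, ∀ y : H₂, ‖G τ y‖ ≤ Real.exp (-γ₂ * t) * ‖y‖ := by
      intro τ hτ y
      simp only [Set.mem_Icc] at hτ
      have h1 := hGdecay τ hτ.2 y
      have h2 : Real.exp (-γ₂ * τ) ≤ Real.exp (-γ₂ * t) := by
        apply Real.exp_le_exp.2; nlinarith [hτ.1]
      calc ‖G τ y‖ ≤ Real.exp (-γ₂ * τ) * ‖y‖ := h1
        _ ≤ Real.exp (-γ₂ * t) * ‖y‖ := mul_le_mul_of_nonneg_right h2 (norm_nonneg _)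
    have hGcOn : ∀ y : H₂, ContinuousOn (fun τ : ℝ => G τ y) (Set.Icc t 0) :=
      fun y => (hGcont y).continuousOn
    have hsub2 : Set.uIcc (0:ℝ) t ⊆ Set.Iic (0:ℝ) := by
      rw [huIcc]; exact fun s hs => hs.2
    have hcontZv : ContinuousOn (fun s => g (XZ s + xhat s, YZ s)) (Set.uIcc (0:ℝ) t) :=
      hgc.comp_continuousOn
        (((hXZc.mono hsub2).add (hxc.mono hsub2)).prodMk (hYZc.mono hsub2))
    have hcontWv : ContinuousOn (fun s => g (XW s + uhat s, YW s)) (Set.uIcc (0:ℝ) t) :=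
      hgc.comp_continuousOn
        (((hXWc.mono hsub2).add (huc.mono hsub2)).prodMk (hYWc.mono hsub2))
    have hτcont : ContinuousOn (fun s : ℝ => t - s) (Set.uIcc (0:ℝ) t) := by fun_prop
    have hcontZ : ContinuousOn (fun s => G (t - s) (g (XZ s + xhat s, YZ s)))
        (Set.uIcc (0:ℝ) t) :=
      strong_cont_apply G (Set.Icc t 0) (Real.exp (-γ₂ * t)) hGcOn hGbd hτcont hτmaps hcontZv
    have hcontW : ContinuousOn (fun s => G (t - s) (g (XW s + uhat s, YW s)))
        (Set.uIcc (0:ℝ) t) :=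
      strong_cont_apply G (Set.Icc t 0) (Real.exp (-γ₂ * t)) hGcOn hGbd hτcont hτmaps hcontWv
    have hintZ : IntervalIntegrable (fun s => G (t - s) (g (XZ s + xhat s, YZ s)))
        MeasureTheory.volume 0 t := hcontZ.intervalIntegrable
    have hintW : IntervalIntegrable (fun s => G (t - s) (g (XW s + uhat s, YW s)))
        MeasureTheory.volume 0 t := hcontW.intervalIntegrable
    have hdiffeq : YZ t - YW t = ∫ s in (0:ℝ)..t,
        (G (t - s) (g (XZ s + xhat s, YZ s)) - G (t - s) (g (XW s + uhat s, YW s))) := by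
      rw [(hZeq t ht).2, (hWeq t ht).2, add_sub_add_left_eq_sub,
        ← intervalIntegral.integral_sub hintZ hintW]
    have hFdb : ∀ s : ℝ, t ≤ s → s ≤ 0 →
        ‖G (t - s) (g (XZ s + xhat s, YZ s)) - G (t - s) (g (XW s + uhat s, YW s))‖
        ≤ (K * D) * Real.exp (-γ₂ * (t - s)) * Real.exp (-w * s) := by
      intro s hs1 hs2
      rw [← map_sub]
      have h1 := hGdecay (t - s) (by linarith)
        (g (XZ s + xhat s, YZ s) - g (XW s + uhat s, YW s))
      have h2 := hg (XZ s + xhat s, YZ s) (XW s + uhat s, YW s)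
      simp only at h2
      have h3 := hdelta s hs2
      have hep : (0:ℝ) < Real.exp (-γ₂ * (t - s)) := Real.exp_pos _
      have h4 : ‖g (XZ s + xhat s, YZ s) - g (XW s + uhat s, YW s)‖
          ≤ K * (Real.exp (-(w * s)) * D) := by nlinarith
      calc ‖G (t - s) (g (XZ s + xhat s, YZ s) - g (XW s + uhat s, YW s))‖
          ≤ Real.exp (-γ₂ * (t - s))
            * ‖g (XZ s + xhat s, YZ s) - g (XW s + uhat s, YW s)‖ := h1
        _ ≤ Real.exp (-γ₂ * (t - s)) * (K * (Real.exp (-(w * s)) * D)) :=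
            mul_le_mul_of_nonneg_left h4 hep.le
        _ = (K * D) * Real.exp (-γ₂ * (t - s)) * Real.exp (-w * s) := by
            rw [neg_mul w s]; ring
    have hbnd := interval_bound ht (by positivity) hwγ₂ (hcontZ.sub hcontW) hFdb
    rw [hdiffeq]
    calc Real.exp (w * t) * ‖∫ s in (0:ℝ)..t,
          (G (t - s) (g (XZ s + xhat s, YZ s)) - G (t - s) (g (XW s + uhat s, YW s)))‖
        ≤ Real.exp (w * t) * ((K * D) * Real.exp (-w * t) / (w - γ₂)) :=
          mul_le_mul_of_nonneg_left hbnd (Real.exp_pos _).le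
      _ = (Real.exp (w * t) * Real.exp (-w * t)) * (K * D / (w - γ₂)) := by ring
      _ = K * D / (w - γ₂) := by rw [← Real.exp_add]; simp
      _ = b * D := by rw [hb']; ring
  -- sup bounds
  have hDXle : DX ≤ a * D := by
    rw [hDXdef]
    unfold wnorm
    refine ciSup_le ?_
    rintro ⟨s, hs⟩
    simpa using claimX s hs
  have hDYle : DY ≤ b * D := by
    rw [hDYdef]
    unfold wnorm
    refine ciSup_le ?_
    rintro ⟨s, hs⟩
    simpa using claimY s hs
  have hm : 0 < 1 - (a + b) := by linarith
  rw [hDdef] at hDXle hDYle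
  have hSsum : (DX + DY) * (1 - (a + b)) ≤ (a + b) * Δ := by nlinarith [add_le_add hDXle hDYle]
  have hfin : DX * (1 - (a + b)) ≤ a * Δ := by
    nlinarith [mul_le_mul_of_nonneg_right hDXle hm.le, mul_le_mul_of_nonneg_left hSsum ha0.le]
  have hfin2 : DX ≤ a * Δ / (1 - (a + b)) := (le_div_iff₀ hm).2 hfin
  have h00 : ‖XZ 0 - XW 0‖ ≤ DX := by
    have h := wnorm_bound (φ := fun s => XZ s - XW s) hDXb (le_refl (0:ℝ)); simpa using h
  have h01 : ‖xhat 0 - uhat 0‖ ≤ Δ := by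
    have h := wnorm_bound (φ := fun s => xhat s - uhat s) hΔb (le_refl (0:ℝ)); simpa using h
  have htri : ‖(XZ 0 + xhat 0) - (XW 0 + uhat 0)‖ ≤ ‖XZ 0 - XW 0‖ + ‖xhat 0 - uhat 0‖ := by
    have he : (XZ 0 + xhat 0) - (XW 0 + uhat 0) = (XZ 0 - XW 0) + (xhat 0 - uhat 0) := by abel
    rw [he]; exact norm_add_le _ _
  calc ‖(XZ 0 + xhat 0) - (XW 0 + uhat 0)‖ ≤ DX + Δ := by linarith
    _ ≤ a * Δ / (1 - (a + b)) + Δ := by linarith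
    _ = (a / (1 - (a + b)) + 1) * Δ := by rw [ha]; ring
    _ = (K / ((γ₁ - ρ) * (1 - (a + b))) + 1) * Δ := by rw [ha, div_div]
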